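/- Let G₁ and G₂ be kernels on R^n_+, each having the reflection properties (P1)–(P3) for every λ > 0, and define the composed kernel G(x, y) = ∫_{R^n_+} G₁(x, z) G₂(z, y) dz, assumed finite for all x ≠ y in R^n_+. Then G has property (P1): for every λ > 0 and all x, y ∈ Σ_λ with x ≠ y, G(x^λ, y^λ) > max{G(x^λ, y), G(x, y^λ)}. -/

import Mathlib

open MeasureTheory Filter Set Metric
open scoped ENNReal

noncomputable section

variable {n : ℕ}

/-- Reflection of `x` about the hyperplane `x i = lam`. -/
def reflect (i : Fin n) (lam : ℝ) (x : EuclideanSpace ℝ (Fin n)) :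
    EuclideanSpace ℝ (Fin n) :=
  WithLp.toLp 2 (Function.update x.ofLp i (2 * lam - x i))

/-- The half space `R^n_+ = {x : x i > 0}` (with `i` the last coordinate). -/
def halfSpace (i : Fin n) : Set (EuclideanSpace ℝ (Fin n)) := {x | 0 < x i}

/-- `Σ_λ = {x ∈ R^n_+ : 0 < x i < λ}`. -/
def sigmaSlab (i : Fin n) (lam : ℝ) : Set (EuclideanSpace ℝ (Fin n)) :=
  {x | 0 < x i ∧ x i < lam}

/-- Property (P1) of a kernel. -/
def PropP1 (i : Fin n) (K : EuclideanSpace ℝ (Fin n) → EuclideanSpace ℝ (Fin n) → ℝ) : Prop :=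
  ∀ lam > (0 : ℝ), ∀ x ∈ sigmaSlab i lam, ∀ y ∈ sigmaSlab i lam, x ≠ y →
    max (K (reflect i lam x) y) (K x (reflect i lam y)) <
      K (reflect i lam x) (reflect i lam y)

/-- Property (P2) of a kernel. -/
def PropP2 (i : Fin n) (K : EuclideanSpace ℝ (Fin n) → EuclideanSpace ℝ (Fin n) → ℝ) : Prop :=
  ∀ lam > (0 : ℝ), ∀ x ∈ sigmaSlab i lam, ∀ y ∈ sigmaSlab i lam, x ≠ y →
    |K (reflect i lam x) y - K x (reflect i lam y)| <
      K (reflect i lam x) (reflect i lam y) - K x y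

/-- Property (P3) of a kernel. -/
def PropP3 (i : Fin n) (K : EuclideanSpace ℝ (Fin n) → EuclideanSpace ℝ (Fin n) → ℝ) : Prop :=
  ∀ lam > (0 : ℝ), ∀ x ∈ sigmaSlab i lam, ∀ y : EuclideanSpace ℝ (Fin n),
    0 < y i → lam ≤ y i → y ≠ reflect i lam x →
      K x y < K (reflect i lam x) y ∧ K y x < K y (reflect i lam x)

/-- A kernel has the reflection properties (P1)-(P3). -/
def HasReflProps (i : Fin n) (K : EuclideanSpace ℝ (Fin n) → EuclideanSpace ℝ (Fin n) → ℝ) :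
    Prop :=
  PropP1 i K ∧ PropP2 i K ∧ PropP3 i K

/-!
Write `G(x^λ, y^λ) - G(x^λ, y) = ∫ G₁(x^λ, z) (G₂(z, y^λ) - G₂(z, y)) dz`. Above `T_λ` the
integrand is nonnegative by (P3) for `G₂`. The strip `λ < z_n < 2λ` is the mirror image of `Σ_λ`,
and pairing `z ∈ Σ_λ` with `z^λ` gives a positive sum: (P2) for `G₂` makes the two `G₂`-differences
positive on average, (P3) makes the one at `z^λ` positive, and (P3) for `G₁` gives it the larger
weight. The other half of (P1) is the same statement for the transposed kernel
`G(y, x) = ∫ G₂(z, x) G₁(y, z) dz`.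
-/

lemma integral_pos_of_ae_pos {α : Type*} [MeasurableSpace α] {μ : Measure α} [NeZero μ]
    {f : α → ℝ} (hfi : Integrable f μ) (hf : ∀ᵐ a ∂μ, 0 < f a) : 0 < ∫ a, f a ∂μ := by
  rw [integral_pos_iff_support_of_nonneg_ae (hf.mono fun _ ha => ha.le) hfi, pos_iff_ne_zero]
  intro hzero
  have hfalse : ∀ᵐ a ∂μ, False := by
    filter_upwards [hf, measure_eq_zero_iff_ae_notMem.mp hzero] with a hpos hnot
    exact hnot hpos.ne'
  exact NeZero.ne μ (ae_eq_bot.mp (eventually_false_iff_eq_bot.mp hfalse))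

section Reflection

variable (i : Fin n) (lam : ℝ)

@[simp]
lemma reflect_apply_self (x : EuclideanSpace ℝ (Fin n)) : reflect i lam x i = 2 * lam - x i := by
  simp [reflect]

lemma reflect_apply_of_ne (x : EuclideanSpace ℝ (Fin n)) {j : Fin n} (h : j ≠ i) :
    reflect i lam x j = x j := by
  simp [reflect, Function.update_of_ne h]

lemma reflect_involutive : Function.Involutive (reflect i lam) := by
  intro x
  ext j
  rcases eq_or_ne j i with rfl | h
  · simp
  · rw [reflect_apply_of_ne _ _ _ h, reflect_apply_of_ne _ _ _ h]

def negCoord : EuclideanSpace ℝ (Fin n) ≃ₗᵢ[ℝ] EuclideanSpace ℝ (Fin n) :=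
  LinearIsometryEquiv.piLpCongrRight 2
    (fun j => if j = i then LinearIsometryEquiv.neg ℝ else LinearIsometryEquiv.refl ℝ ℝ)

lemma reflect_eq_single_add_negCoord :
    reflect i lam = fun x => EuclideanSpace.single i (2 * lam) + negCoord i x := by
  funext x
  ext j
  rcases eq_or_ne j i with rfl | h
  · simp [negCoord]
    ring
  · simp [reflect_apply_of_ne _ _ _ h, negCoord, h]

lemma measurePreserving_reflect : MeasurePreserving (reflect i lam) volume volume := by
  rw [reflect_eq_single_add_negCoord]
  exact (measurePreserving_add_left volume _).comp (negCoord i).measurePreserving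

lemma measurableEmbedding_reflect : MeasurableEmbedding (reflect i lam) :=
  (MeasurableEquiv.ofInvolutive _ (reflect_involutive i lam)
    (measurePreserving_reflect i lam).measurable).measurableEmbedding

variable {i lam}

lemma lt_reflect_apply_of_mem_sigmaSlab {x : EuclideanSpace ℝ (Fin n)}
    (hx : x ∈ sigmaSlab i lam) : lam < reflect i lam x i := by
  rw [reflect_apply_self]
  linarith [hx.2]

lemma reflect_ne_of_mem_sigmaSlab {x y : EuclideanSpace ℝ (Fin n)} (hx : x ∈ sigmaSlab i lam)
    (hy : y ∈ sigmaSlab i lam) : reflect i lam x ≠ y := fun h =>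
  (hy.2.trans (lt_reflect_apply_of_mem_sigmaSlab hx)).ne (by rw [h])

lemma reflect_mem_halfSpace_of_mem_sigmaSlab {x : EuclideanSpace ℝ (Fin n)}
    (hx : x ∈ sigmaSlab i lam) : reflect i lam x ∈ halfSpace i :=
  hx.1.trans (hx.2.trans (lt_reflect_apply_of_mem_sigmaSlab hx))

lemma preimage_reflect_sigmaSlab_subset :
    reflect i lam ⁻¹' sigmaSlab i lam ⊆ {z | lam ≤ z i} := fun z hz => by
  have h := hz.2
  rw [reflect_apply_self] at h
  show lam ≤ z i
  linarith

variable (i lam) in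
lemma isOpen_sigmaSlab : IsOpen (sigmaSlab i lam) :=
  isOpen_Ioo.preimage (EuclideanSpace.proj i).continuous

lemma volume_sigmaSlab_ne_zero (hlam : 0 < lam) : volume (sigmaSlab i lam) ≠ 0 := by
  refine ((isOpen_sigmaSlab i lam).measure_pos volume ⟨EuclideanSpace.single i (lam / 2), ?_⟩).ne'
  constructor <;> simp <;> linarith

lemma halfSpace_eq_sigmaSlab_union (hlam : 0 < lam) :
    halfSpace i = sigmaSlab i lam ∪ {z : EuclideanSpace ℝ (Fin n) | lam ≤ z i} := by
  ext z
  simp only [halfSpace, sigmaSlab, mem_union, mem_ofPred_eq]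
  constructor
  · intro hz
    exact (lt_or_ge (z i) lam).imp (fun h => ⟨hz, h⟩) id
  · rintro (h | h)
    exacts [h.1, hlam.trans_le h]

/-- The reflection folds the strip `λ < z_i < 2λ` onto `Σ_λ`; the rest of `{λ ≤ z_i}` only
adds a nonnegative amount. -/
lemma integral_halfSpace_pos_of_reflect {f : EuclideanSpace ℝ (Fin n) → ℝ} (hlam : 0 < lam)
    (hfi : IntegrableOn f (halfSpace i))
    (hf_upper : ∀ᵐ z ∂volume.restrict {z : EuclideanSpace ℝ (Fin n) | lam ≤ z i}, 0 ≤ f z)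
    (hf_pair : ∀ᵐ z ∂volume.restrict (sigmaSlab i lam), 0 < f z + f (reflect i lam z)) :
    0 < ∫ z in halfSpace i, f z := by
  set U : Set (EuclideanSpace ℝ (Fin n)) := {z | lam ≤ z i}
  have hsplit := halfSpace_eq_sigmaSlab_union (i := i) hlam
  have hU : MeasurableSet U := measurableSet_le measurable_const (by fun_prop)
  have hfSlab : IntegrableOn f (sigmaSlab i lam) := hfi.mono_set (hsplit ▸ subset_union_left)
  have hfU : IntegrableOn f U := hfi.mono_set (hsplit ▸ subset_union_right)
  have hpre : reflect i lam ⁻¹' (reflect i lam ⁻¹' sigmaSlab i lam) = sigmaSlab i lam := by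
    rw [← preimage_comp, (reflect_involutive i lam).comp_self, preimage_id]
  have hmp := measurePreserving_reflect i lam
  have hme := measurableEmbedding_reflect i lam
  have hfSlab' : IntegrableOn (fun z => f (reflect i lam z)) (sigmaSlab i lam) := by
    rw [← hpre]
    exact (hmp.integrableOn_comp_preimage hme).mpr
      (hfU.mono_set preimage_reflect_sigmaSlab_subset)
  have hfold : ∫ z in sigmaSlab i lam, f (reflect i lam z) ≤ ∫ z in U, f z := by
    rw [← hpre, hmp.setIntegral_preimage_emb hme]
    exact setIntegral_mono_set hfU hf_upper
      (Eventually.of_forall preimage_reflect_sigmaSlab_subset)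
  have hpair : 0 < ∫ z in sigmaSlab i lam, (f z + f (reflect i lam z)) :=
    have : NeZero (volume.restrict (sigmaSlab i lam)) :=
      ⟨by simpa using volume_sigmaSlab_ne_zero hlam⟩
    integral_pos_of_ae_pos (hfSlab.add hfSlab') hf_pair
  have hdisj : Disjoint (sigmaSlab i lam) U :=
    disjoint_left.mpr fun z hz hzU => (hz.2.trans_le hzU).false
  rw [hsplit, setIntegral_union hdisj hU hfSlab hfU]
  rw [integral_add hfSlab hfSlab'] at hpair
  linarith

end Reflection

lemma PropP2.swap {i : Fin n} {K : EuclideanSpace ℝ (Fin n) → EuclideanSpace ℝ (Fin n) → ℝ}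
    (h : PropP2 i K) : PropP2 i (Function.swap K) := fun lam hlam x hx y hy hxy => by
  simpa [abs_sub_comm] using h lam hlam y hy x hx hxy.symm

lemma PropP3.swap {i : Fin n} {K : EuclideanSpace ℝ (Fin n) → EuclideanSpace ℝ (Fin n) → ℝ}
    (h : PropP3 i K) : PropP3 i (Function.swap K) := fun lam hlam x hx y hy hly hne =>
  (h lam hlam x hx y hy hly hne).symm

section Composition

variable {i : Fin n} {lam : ℝ} {G₁ G₂ : EuclideanSpace ℝ (Fin n) → EuclideanSpace ℝ (Fin n) → ℝ}

lemma composed_integrand_add_reflect_pos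
    (h₁pos : ∀ x ∈ halfSpace i, ∀ y ∈ halfSpace i, 0 < G₁ x y)
    (h₁ : PropP3 i G₁) (h₂ : PropP2 i G₂) (h₂' : PropP3 i G₂) (hlam : 0 < lam)
    {w y z : EuclideanSpace ℝ (Fin n)} (hw : lam ≤ w i) (hy : y ∈ sigmaSlab i lam)
    (hz : z ∈ sigmaSlab i lam) (hzy : z ≠ y) (hzw : reflect i lam z ≠ w) :
    0 < G₁ w z * (G₂ z (reflect i lam y) - G₂ z y) +
      G₁ w (reflect i lam z) *
        (G₂ (reflect i lam z) (reflect i lam y) - G₂ (reflect i lam z) y) := by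
  set zr := reflect i lam z
  set yr := reflect i lam y
  have ha : 0 < G₁ w z := h₁pos w (hlam.trans_le hw) z hz.1
  have hab : G₁ w z < G₁ w zr := (h₁ lam hlam z hz w (hlam.trans_le hw) hw hzw.symm).2
  have hd : G₂ zr y < G₂ zr yr :=
    (h₂' lam hlam y hy zr (reflect_mem_halfSpace_of_mem_sigmaSlab hz)
      (lt_reflect_apply_of_mem_sigmaSlab hz).le
      ((reflect_involutive i lam).injective.ne hzy)).2
  have hcd := abs_lt.mp (h₂ lam hlam z hz y hy hzy)
  have key : G₁ w z * (G₂ z yr - G₂ z y) + G₁ w zr * (G₂ zr yr - G₂ zr y) =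
      G₁ w z * ((G₂ z yr - G₂ z y) + (G₂ zr yr - G₂ zr y)) +
        (G₁ w zr - G₁ w z) * (G₂ zr yr - G₂ zr y) := by ring
  rw [key]
  exact add_pos (mul_pos ha (by linarith [hcd.1])) (mul_pos (sub_pos.mpr hab) (sub_pos.mpr hd))

lemma composed_lt_composed_reflect_right
    (h₁pos : ∀ x ∈ halfSpace i, ∀ y ∈ halfSpace i, 0 < G₁ x y)
    (h₁ : PropP3 i G₁) (h₂ : PropP2 i G₂) (h₂' : PropP3 i G₂) (hlam : 0 < lam)
    {w y : EuclideanSpace ℝ (Fin n)} (hw : lam ≤ w i) (hy : y ∈ sigmaSlab i lam)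
    (hint : IntegrableOn (fun z => G₁ w z * G₂ z y) (halfSpace i))
    (hint' : IntegrableOn (fun z => G₁ w z * G₂ z (reflect i lam y)) (halfSpace i)) :
    ∫ z in halfSpace i, G₁ w z * G₂ z y < ∫ z in halfSpace i, G₁ w z * G₂ z (reflect i lam y) := by
  -- makes the space nontrivial, so that `volume` has no atoms
  have : Nonempty (Fin n) := ⟨i⟩
  rw [← sub_pos, ← integral_sub hint' hint]
  refine integral_halfSpace_pos_of_reflect hlam (hint'.sub hint) ?_ ?_
  · filter_upwards [ae_restrict_mem (measurableSet_le measurable_const (by fun_prop)),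
      ae_restrict_of_ae (Measure.ae_ne _ (reflect i lam y))] with z (hz : lam ≤ z i) hzy
    have hG₁ : 0 < G₁ w z := h₁pos w (hlam.trans_le hw) z (hlam.trans_le hz)
    have hG₂ : G₂ z y < G₂ z (reflect i lam y) :=
      (h₂' lam hlam y hy z (hlam.trans_le hz) hz hzy).2
    rw [← mul_sub]
    exact mul_nonneg hG₁.le (sub_nonneg.mpr hG₂.le)
  · filter_upwards [ae_restrict_mem (isOpen_sigmaSlab i lam).measurableSet,
      ae_restrict_of_ae (Measure.ae_ne _ y),
      ae_restrict_of_ae (Measure.ae_ne _ (reflect i lam w))] with z hz hzy hzw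
    have hzw' : reflect i lam z ≠ w := fun h => hzw (by rw [← h, reflect_involutive])
    simpa only [Pi.sub_apply, ← mul_sub] using
      composed_integrand_add_reflect_pos h₁pos h₁ h₂ h₂' hlam hw hy hz hzy hzw'

end Composition

theorem composed_kernel_P1_general
    (n : ℕ) (i : Fin n)
    (G₁ G₂ : EuclideanSpace ℝ (Fin n) → EuclideanSpace ℝ (Fin n) → ℝ)
    (h₁pos : ∀ x ∈ halfSpace i, ∀ y ∈ halfSpace i, 0 < G₁ x y)
    (h₂pos : ∀ x ∈ halfSpace i, ∀ y ∈ halfSpace i, 0 < G₂ x y)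
    (h₁ : HasReflProps i G₁) (h₂ : HasReflProps i G₂)
    (hint : ∀ x ∈ halfSpace i, ∀ y ∈ halfSpace i, x ≠ y →
      IntegrableOn (fun z => G₁ x z * G₂ z y) (halfSpace i)) :
    PropP1 i (fun x y => ∫ z in halfSpace i, G₁ x z * G₂ z y) := by
  intro lam hlam x hx y hy hxy
  have hxr := reflect_mem_halfSpace_of_mem_sigmaSlab hx
  have hyr := reflect_mem_halfSpace_of_mem_sigmaSlab hy
  have hxr_ne_yr : reflect i lam x ≠ reflect i lam y := (reflect_involutive i lam).injective.ne hxy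
  refine max_lt ?_ ?_
  · exact composed_lt_composed_reflect_right h₁pos h₁.2.2 h₂.2.1 h₂.2.2 hlam
      (lt_reflect_apply_of_mem_sigmaSlab hx).le hy
      (hint _ hxr _ hy.1 (reflect_ne_of_mem_sigmaSlab hx hy)) (hint _ hxr _ hyr hxr_ne_yr)
  · -- `G(b, a) = ∫ G₂(z, a) G₁(b, z) dz` is the composition of the transposed factors
    have h := composed_lt_composed_reflect_right (G₁ := Function.swap G₂) (G₂ := Function.swap G₁)
      (fun a ha b hb => h₂pos b hb a ha) h₂.2.2.swap h₁.2.1.swap h₁.2.2.swap hlam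
      (lt_reflect_apply_of_mem_sigmaSlab hy).le hx
      (by simpa only [Function.swap, mul_comm] using
        hint _ hx.1 _ hyr (reflect_ne_of_mem_sigmaSlab hy hx).symm)
      (by simpa only [Function.swap, mul_comm] using hint _ hxr _ hyr hxr_ne_yr)
    simpa only [Function.swap, mul_comm] using h

/-- the composed kernel `G(x,y) = ∫_{R^n_+} G₁(x,z) G₂(z,y) dz`
inherits property (P1). -/
theorem composed_kernel_P1
    (n : ℕ) (i : Fin n) (hi : (i : ℕ) = n - 1) (hn : 2 ≤ n)
    (G₁ G₂ : EuclideanSpace ℝ (Fin n) → EuclideanSpace ℝ (Fin n) → ℝ)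
    (h₁pos : ∀ x ∈ halfSpace i, ∀ y ∈ halfSpace i, 0 < G₁ x y)
    (h₂pos : ∀ x ∈ halfSpace i, ∀ y ∈ halfSpace i, 0 < G₂ x y)
    (h₁ : HasReflProps i G₁) (h₂ : HasReflProps i G₂)
    (hint : ∀ x ∈ halfSpace i, ∀ y ∈ halfSpace i, x ≠ y →
      IntegrableOn (fun z => G₁ x z * G₂ z y) (halfSpace i)) :
    PropP1 i (fun x y => ∫ z in halfSpace i, G₁ x z * G₂ z y) :=
  composed_kernel_P1_general n i G₁ G₂ h₁pos h₂pos h₁ h₂ hint
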